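/- Let G be a symmetric directed graph on [n], f the conjunctive network on G, x ∈ {0,1}^n and y := f^{1,2,…,n}(x). Then for each connected component of the underlying undirected graph of G with at least 2 vertices, either y_i = 1 for all vertices i of the component, or there exist adjacent vertices i, j in the component with y_i = y_j = 0. -/
import Mathlib


/-- One asynchronous update step: replace coordinate `i` of `x` by `f x i`. -/
def updateStep {n : ℕ} (f : (Fin n → Bool) → (Fin n → Bool)) (x : Fin n → Bool)
    (i : Fin n) : Fin n → Bool :=
  Function.update x i (f x i)

/-- Action of a word on a state. -/
def applyWord {n : ℕ} (f : (Fin n → Bool) → (Fin n → Bool)) :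
    List (Fin n) → (Fin n → Bool) → (Fin n → Bool)
  | [], x => x
  | i :: w, x => applyWord f w (updateStep f x i)

/-- A word `w` fixes `f` if applying it to any state yields a fixed point of `f`. -/
def Fixes {n : ℕ} (f : (Fin n → Bool) → (Fin n → Bool)) (w : List (Fin n)) : Prop :=
  ∀ x, f (applyWord f w x) = applyWord f w x

/-- The digraph `E` is symmetric: arcs between distinct vertices come in pairs. -/
def SymDigraph {n : ℕ} (E : Fin n → Fin n → Bool) : Prop :=
  ∀ i j : Fin n, i ≠ j → E i j = E j i

/-- The conjunctive network on the digraph `E`: `f_i(x)` is the conjunction of `x_j`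
over the in-neighbors `j` of `i` (`1` if `i` has no in-neighbor). -/
def conjNet {n : ℕ} (E : Fin n → Fin n → Bool) (x : Fin n → Bool) (i : Fin n) : Bool :=
  decide (∀ j : Fin n, E j i = true → x j = true)

/-- A word over alphabet `[n]` is `(n,k)`-universal if it contains as subwords all
words of length `n - k` without repeated letters. -/
def NKUniversal (n k : ℕ) (W : List (Fin n)) : Prop :=
  ∀ u : List (Fin n), u.Nodup → u.length = n - k → u.Sublist W

/-- `λ_k(n)`: the minimum length of an `(n,k)`-universal word. -/
noncomputable def lamK (n k : ℕ) : ℕ :=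
  sInf {l : ℕ | ∃ W : List (Fin n), W.length = l ∧ NKUniversal n k W}

/-- `λ_CS(n)`: the fixing length of the family of conjunctive networks on symmetric
digraphs on `n` vertices. -/
noncomputable def lamCS (n : ℕ) : ℕ :=
  sInf {l : ℕ | ∃ W : List (Fin n), W.length = l ∧
    ∀ E : Fin n → Fin n → Bool, SymDigraph E → Fixes (conjNet E) W}

lemma applyWord_append {n : ℕ} (f : (Fin n → Bool) → (Fin n → Bool))
    (w₁ w₂ : List (Fin n)) (x : Fin n → Bool) :
    applyWord f (w₁ ++ w₂) x = applyWord f w₂ (applyWord f w₁ x) := by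
  induction w₁ generalizing x with
  | nil => rfl
  | cons a w ih => simp [applyWord, ih]

lemma applyWord_notMem {n : ℕ} (f : (Fin n → Bool) → (Fin n → Bool))
    (w : List (Fin n)) (x : Fin n → Bool) (j : Fin n) (h : j ∉ w) :
    applyWord f w x j = x j := by
  induction w generalizing x with
  | nil => rfl
  | cons a w ih =>
    simp only [List.mem_cons, not_or] at h
    rw [applyWord, ih _ h.2, updateStep, Function.update_of_ne h.1]

def sweepState {n : ℕ} (E : Fin n → Fin n → Bool) (x : Fin n → Bool) (k : ℕ) :
    Fin n → Bool :=
  applyWord (conjNet E) ((List.finRange n).take k) x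

lemma sweepState_succ {n : ℕ} (E : Fin n → Fin n → Bool) (x : Fin n → Bool)
    (k : ℕ) (hk : k < n) :
    sweepState E x (k + 1) = updateStep (conjNet E) (sweepState E x k) ⟨k, hk⟩ := by
  unfold sweepState
  rw [List.take_succ]
  have hlen : k < (List.finRange n).length := by simpa using hk
  rw [List.getElem?_eq_getElem hlen]
  simp only [List.getElem_finRange, Fin.cast_mk, Option.toList_some]
  rw [applyWord_append]
  rfl

lemma sweepState_eq_x {n : ℕ} (E : Fin n → Fin n → Bool) (x : Fin n → Bool)
    (k : ℕ) (j : Fin n) (h : k ≤ j.val) : sweepState E x k j = x j := by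
  induction k with
  | zero => rfl
  | succ m ih =>
    have hm : m < n := by have := j.isLt; omega
    rw [sweepState_succ E x m hm, updateStep, Function.update_of_ne, ih (Nat.le_of_succ_le h)]
    intro hj
    rw [hj] at h
    simp at h

lemma sweepState_stable {n : ℕ} (E : Fin n → Fin n → Bool) (x : Fin n → Bool)
    (k : ℕ) (j : Fin n) (h : j.val + 1 ≤ k) (hn : k ≤ n) :
    sweepState E x k j = sweepState E x (j.val + 1) j := by
  induction k with
  | zero => omega
  | succ m ih =>
    rcases Nat.lt_or_ge (j.val + 1) (m + 1) with hlt | hge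
    · have hm : m < n := by omega
      rw [sweepState_succ E x m hm, updateStep, Function.update_of_ne, ih (by omega) (by omega)]
      intro hj; rw [hj] at hlt; simp at hlt
    · have : m + 1 = j.val + 1 := le_antisymm hge h
      rw [this]

lemma sweep_val {n : ℕ} (E : Fin n → Fin n → Bool) (x : Fin n → Bool) (j : Fin n) :
    applyWord (conjNet E) (List.finRange n) x j = conjNet E (sweepState E x j.val) j := by
  have h1 : applyWord (conjNet E) (List.finRange n) x = sweepState E x n := by
    unfold sweepState
    rw [List.take_of_length_le (by simp)]
  rw [h1, sweepState_stable E x n j (by omega) le_rfl, sweepState_succ E x j.val j.isLt,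
    updateStep]
  have : (⟨j.val, j.isLt⟩ : Fin n) = j := rfl
  rw [this, Function.update_self]

lemma sweepState_final {n : ℕ} (E : Fin n → Fin n → Bool) (x : Fin n → Bool)
    (k : ℕ) (j : Fin n) (h1 : j.val < k) (h2 : k ≤ n) :
    sweepState E x k j = applyWord (conjNet E) (List.finRange n) x j := by
  rw [sweep_val, sweepState_stable E x k j h1 h2, sweepState_succ E x j.val j.isLt,
    updateStep]
  have : (⟨j.val, j.isLt⟩ : Fin n) = j := rfl
  rw [this, Function.update_self]

lemma conjNet_false {n : ℕ} (E : Fin n → Fin n → Bool) (z : Fin n → Bool) (i : Fin n) :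
    conjNet E z i = false ↔ ∃ j, E j i = true ∧ z j = false := by
  simp [conjNet]

lemma key {n : ℕ} (E : Fin n → Fin n → Bool) (hsym : SymDigraph E) (x : Fin n → Bool)
    (i : Fin n) (hi : applyWord (conjNet E) (List.finRange n) x i = false)
    (k : Fin n) (hk : k ≠ i) (hEk : E k i = true ∨ E i k = true) :
    ∃ j, j ≠ i ∧ (E j i = true ∨ E i j = true) ∧
      applyWord (conjNet E) (List.finRange n) x j = false := by
  have hi' : conjNet E (sweepState E x i.val) i = false := by rw [← sweep_val]; exact hi
  obtain ⟨j, hji, hjval⟩ := (conjNet_false _ _ _).mp hi'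
  rcases lt_trichotomy j.val i.val with hlt | heq | hgt
  · refine ⟨j, ?_, Or.inl hji, ?_⟩
    · intro h; rw [h] at hlt; exact lt_irrefl _ hlt
    · rw [← sweepState_final E x i.val j hlt (Nat.le_of_lt i.isLt)]
      exact hjval
  · -- j = i : loop case, x i = false; use the neighbor k
    have hj_eq : j = i := Fin.ext heq
    subst hj_eq
    have hxj : x j = false := by
      rw [← sweepState_eq_x E x j.val j le_rfl]; exact hjval
    have hki : E k j = true ∧ E j k = true := by
      have hs := hsym k j hk
      rcases hEk with h | h
      · exact ⟨h, by rw [← hs]; exact h⟩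
      · exact ⟨by rw [hs]; exact h, h⟩
    refine ⟨k, hk, Or.inl hki.1, ?_⟩
    rw [sweep_val, conjNet_false]
    refine ⟨j, hki.2, ?_⟩
    rcases lt_trichotomy k.val j.val with hlt' | heq' | hgt'
    · rw [sweepState_eq_x E x k.val j (Nat.le_of_lt hlt')]; exact hxj
    · exact absurd (Fin.ext heq') hk
    · rw [sweepState_final E x k.val j hgt' (Nat.le_of_lt k.isLt)]; exact hi
  · -- j updated after i : y j = false since i is an in-neighbor of j with y i = false
    have hij : E i j = true := by
      have hs := hsym i j (by intro h; rw [h] at hgt; exact lt_irrefl _ hgt)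
      rw [hs]; exact hji
    refine ⟨j, ?_, Or.inl hji, ?_⟩
    · intro h; rw [h] at hgt; exact lt_irrefl _ hgt
    · rw [sweep_val, conjNet_false]
      exact ⟨i, hij, by rw [sweepState_final E x j.val i hgt (Nat.le_of_lt j.isLt)]; exact hi⟩


/-- let `f` be the conjunctive network on a symmetric digraph `E`,
`x` a state and `y := f^{1,…,n}(x)`. Then each connected component of the underlying
undirected graph of `E` with at least two vertices (witnessed by a vertex `i₀` having
a neighbor) either has `y_i = 1` on all its vertices, or contains an edge `{i, j}`
with `y_i = y_j = 0`. -/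
theorem symmetric_conjunctive_after_sweep (n : ℕ) (E : Fin n → Fin n → Bool)
    (hsym : SymDigraph E) (x : Fin n → Bool) :
    ∀ i₀ : Fin n,
      (∃ j, (SimpleGraph.fromRel fun a b => E a b = true).Adj i₀ j) →
      (∀ i, (SimpleGraph.fromRel fun a b => E a b = true).Reachable i₀ i →
          applyWord (conjNet E) (List.finRange n) x i = true) ∨
        (∃ i j, (SimpleGraph.fromRel fun a b => E a b = true).Reachable i₀ i ∧
          (SimpleGraph.fromRel fun a b => E a b = true).Adj i j ∧
          applyWord (conjNet E) (List.finRange n) x i = false ∧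
          applyWord (conjNet E) (List.finRange n) x j = false) := by
  intro i₀ hnb
  by_cases hall : ∀ i, (SimpleGraph.fromRel fun a b => E a b = true).Reachable i₀ i →
      applyWord (conjNet E) (List.finRange n) x i = true
  · exact Or.inl hall
  · right
    push_neg at hall
    obtain ⟨i, hreach, hifalse⟩ := hall
    replace hifalse := Bool.eq_false_iff.mpr hifalse
    -- find a neighbor k of i
    have hnbi : ∃ k, k ≠ i ∧ (E k i = true ∨ E i k = true) := by
      by_cases hii : i = i₀
      · obtain ⟨j, hadj⟩ := hnb
        rw [SimpleGraph.fromRel_adj] at hadj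
        subst hii
        exact ⟨j, fun h => hadj.1 h.symm, hadj.2.symm⟩
      · obtain ⟨w⟩ := hreach.symm
        cases w with
        | nil => exact absurd rfl hii
        | cons hadj _ =>
          rw [SimpleGraph.fromRel_adj] at hadj
          exact ⟨_, fun h => hadj.1 h.symm, hadj.2.symm⟩
    obtain ⟨k, hk, hEk⟩ := hnbi
    obtain ⟨j, hjne, hjE, hjfalse⟩ := key E hsym x i hifalse k hk hEk
    refine ⟨i, j, hreach, ?_, hifalse, hjfalse⟩
    rw [SimpleGraph.fromRel_adj]
    exact ⟨fun h => hjne h.symm, hjE.symm⟩
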